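/- arXiv:1701.06454 — 2 statements merged into one kernel-verified Lean document; each statement's English description precedes it below -/
import Mathlib

section
/- Let G be an RDF graph over nodes V and labels Σ, let e be a property path, and let A = (Q, Σ±, q0, F, δ) be an NFA over the signed alphabet Σ± whose language L(A) equals L(e). Assume u is a term of G. Then for every node v, the pair (u,v) belongs to ⟦e⟧_G if and only if there exist an accepting state q_f ∈ F and a (possibly empty) directed path in the product graph G × A from the node (u, q0) to the node (v, q_f). -/
/-- Letters of the signed alphabet `Σ± = Σ ∪ {a⁻ | a ∈ Σ}`. -/
inductive Signed (σ : Type*) where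
  | pos (a : σ)
  | neg (a : σ)

/-- Flip the sign of a signed letter. -/
def Signed.flip {σ : Type*} : Signed σ → Signed σ
  | .pos a => .neg a
  | .neg a => .pos a

/-- `inv w`: reverse the word and flip every letter. -/
def winv {σ : Type*} (w : List (Signed σ)) : List (Signed σ) :=
  (w.map Signed.flip).reverse

/-- `Step G ℓ x y` means `G ⊢ x →ℓ y`. An RDF graph is a finite set of triples. -/
def Step {V σ : Type*} (G : Finset (V × σ × V)) : Signed σ → V → V → Prop
  | .pos a, x, y => (x, a, y) ∈ G
  | .neg a, x, y => (y, a, x) ∈ G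

/-- A `w`-labeled path from `x` to `y` in `G`. -/
inductive LabPath {V σ : Type*} (G : Finset (V × σ × V)) : V → List (Signed σ) → V → Prop
  | nil (x : V) : LabPath G x [] x
  | cons {x y z : V} {ℓ : Signed σ} {w : List (Signed σ)} :
      Step G ℓ x y → LabPath G y w z → LabPath G x (ℓ :: w) z

/-- A term of `G`: a node occurring as subject or object of a triple of `G`. -/
def IsTerm {V σ : Type*} (G : Finset (V × σ × V)) (x : V) : Prop :=
  ∃ p y, (x, p, y) ∈ G ∨ (y, p, x) ∈ G

/-- Property paths `e ::= a | e⁻ | e₁·e₂ | e₁+e₂ | e* | e?`. -/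
inductive PP (σ : Type*) where
  | base (a : σ)
  | inv (e : PP σ)
  | comp (e₁ e₂ : PP σ)
  | alt (e₁ e₂ : PP σ)
  | star (e : PP σ)
  | opt (e : PP σ)

/-- `relPow r n` is the `(n+1)`-fold relational composition of `r`. -/
def relPow {V : Type*} (r : V → V → Prop) : ℕ → V → V → Prop
  | 0 => r
  | n + 1 => Relation.Comp r (relPow r n)

/-- The semantics `⟦e⟧_G` of a property path over an RDF graph. -/
def sem {V σ : Type*} (G : Finset (V × σ × V)) : PP σ → V → V → Prop
  | .base a => fun x y => (x, a, y) ∈ G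
  | .inv e => fun x y => sem G e y x
  | .comp e₁ e₂ => Relation.Comp (sem G e₁) (sem G e₂)
  | .alt e₁ e₂ => fun x y => sem G e₁ x y ∨ sem G e₂ x y
  | .star e => fun x y => (∃ n, relPow (sem G e) n x y) ∨ (x = y ∧ IsTerm G x)
  | .opt e => fun x y => sem G e x y ∨ (x = y ∧ IsTerm G x)

/-- The language `L(e) ⊆ (Σ±)*` of a property path. -/
def lang {σ : Type*} : PP σ → Language (Signed σ)
  | .base a => {[Signed.pos a]}
  | .inv e => winv '' lang e
  | .comp e₁ e₂ => lang e₁ * lang e₂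
  | .alt e₁ e₂ => lang e₁ + lang e₂
  | .star e => KStar.kstar (lang e)
  | .opt e => lang e + 1

/-- A run of an NFA with transition relation `δ` on a word. -/
inductive NFARun {σ Q : Type*} (δ : Q → Signed σ → Q → Prop) :
    Q → List (Signed σ) → Q → Prop
  | nil (q : Q) : NFARun δ q [] q
  | cons {q q' q'' : Q} {ℓ : Signed σ} {w : List (Signed σ)} :
      δ q ℓ q' → NFARun δ q' w q'' → NFARun δ q (ℓ :: w) q''

/-- The language `L(A)` of the NFA `(Q, Σ±, q0, F, δ)`. -/
def nfaLang {σ Q : Type*} (δ : Q → Signed σ → Q → Prop) (q0 : Q) (F : Set Q) :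
    Language (Signed σ) :=
  {w | ∃ qf ∈ F, NFARun δ q0 w qf}

/-- Edge relation of the product graph `G × A`. -/
def ProdEdge {V σ Q : Type*} (G : Finset (V × σ × V)) (δ : Q → Signed σ → Q → Prop) :
    V × Q → V × Q → Prop :=
  fun p p' => ∃ ℓ, Step G ℓ p.1 p'.1 ∧ δ p.2 ℓ p'.2

/-- Edge relation of the transition graph of the NFA. -/
def TransEdge {σ Q : Type*} (δ : Q → Signed σ → Q → Prop) : Q → Q → Prop :=
  fun q q' => ∃ ℓ, δ q ℓ q'

/-- `NSteps r n a b`: there is a directed path with exactly `n` edges from `a` to `b`. -/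
def NSteps {α : Type*} (r : α → α → Prop) : ℕ → α → α → Prop
  | 0 => fun a b => a = b
  | n + 1 => fun a c => ∃ b, r a b ∧ NSteps r n b c

/-- Distance (in `ℕ∞`) from a node to a set of nodes in a directed graph. -/
noncomputable def distToSet {α : Type*} (r : α → α → Prop) (S : Set α) (a : α) : ℕ∞ :=
  ⨅ (n : ℕ) (_ : ∃ b ∈ S, NSteps r n a b), (n : ℕ∞)
/-
Both sides say that some word of `L(e) = L(A)` labels a walk of `G` from `u` to `v`: a walk in
`G × A` is exactly a walk of `G` paired with a run of `A` on the same word, and, by structural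
induction on `e`, `⟦e⟧_G` relates a term `x` to `y` iff some word of `L(e)` labels a walk from `x` to
`y`. The only subtlety is the empty word, which `⟦e*⟧_G` and `⟦e?⟧_G` realise only at terms of
`G`; this is harmless from a term, as every walk starting at a term visits only terms.
-/

section LabelledWalks

variable {V σ Q : Type*}

lemma Signed.flip_flip (ℓ : Signed σ) : ℓ.flip.flip = ℓ := by
  cases ℓ <;> rfl

lemma winv_cons (ℓ : Signed σ) (w : List (Signed σ)) : winv (ℓ :: w) = winv w ++ [ℓ.flip] := by
  simp [winv]

lemma winv_winv (w : List (Signed σ)) : winv (winv w) = w := by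
  simp [winv, List.map_reverse, Function.comp_def, Signed.flip_flip]

variable {G : Finset (V × σ × V)}

lemma Step.flip {ℓ : Signed σ} {x y : V} (h : Step G ℓ x y) : Step G ℓ.flip y x := by
  cases ℓ <;> exact h

lemma Step.isTerm_right {ℓ : Signed σ} {x y : V} (h : Step G ℓ x y) : IsTerm G y := by
  cases ℓ with
  | pos a => exact ⟨a, x, Or.inr h⟩
  | neg a => exact ⟨a, x, Or.inl h⟩

lemma LabPath.isTerm {w : List (Signed σ)} {x y : V} (h : LabPath G x w y) (hx : IsTerm G x) :
    IsTerm G y := by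
  induction h with
  | nil => exact hx
  | cons hs _ ih => exact ih hs.isTerm_right

lemma labPath_append_iff {w₁ w₂ : List (Signed σ)} {x z : V} :
    LabPath G x (w₁ ++ w₂) z ↔ ∃ y, LabPath G x w₁ y ∧ LabPath G y w₂ z := by
  induction w₁ generalizing x with
  | nil =>
    refine ⟨fun h => ⟨x, .nil x, h⟩, ?_⟩
    rintro ⟨y, ⟨⟩, h⟩
    exact h
  | cons ℓ w₁ ih =>
    constructor
    · rintro (_ | ⟨hs, hp⟩)
      obtain ⟨y, h₁, h₂⟩ := ih.mp hp
      exact ⟨y, .cons hs h₁, h₂⟩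
    · rintro ⟨y, _ | ⟨hs, hp⟩, hz⟩
      exact .cons hs (ih.mpr ⟨y, hp, hz⟩)

lemma LabPath.append {w₁ w₂ : List (Signed σ)} {x y z : V} (h₁ : LabPath G x w₁ y)
    (h₂ : LabPath G y w₂ z) : LabPath G x (w₁ ++ w₂) z :=
  labPath_append_iff.mpr ⟨y, h₁, h₂⟩

lemma LabPath.winv {w : List (Signed σ)} {x y : V} (h : LabPath G x w y) :
    LabPath G y (winv w) x := by
  induction h with
  | nil x => exact .nil x
  | cons hs _ ih =>
    rw [winv_cons]
    exact ih.append (.cons hs.flip (.nil _))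

lemma labPath_winv_iff {w : List (Signed σ)} {x y : V} :
    LabPath G x (winv w) y ↔ LabPath G y w x :=
  ⟨fun h => winv_winv w ▸ h.winv, LabPath.winv⟩

lemma reflTransGen_prodEdge_iff {δ : Q → Signed σ → Q → Prop} {p p' : V × Q} :
    Relation.ReflTransGen (ProdEdge G δ) p p' ↔
      ∃ w, LabPath G p.1 w p'.1 ∧ NFARun δ p.2 w p'.2 := by
  constructor
  · intro h
    induction h using Relation.ReflTransGen.head_induction_on with
    | refl => exact ⟨[], .nil _, .nil _⟩
    | head hedge _ ih =>
      obtain ⟨ℓ, hs, hd⟩ := hedge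
      obtain ⟨w, hp, hr⟩ := ih
      exact ⟨ℓ :: w, .cons hs hp, .cons hd hr⟩
  · obtain ⟨x, q⟩ := p
    obtain ⟨y, q'⟩ := p'
    rintro ⟨w, hp, hr⟩
    dsimp only at hp hr
    induction hp generalizing q with
    | nil => cases hr; exact .refl
    | cons hs _ ih =>
      obtain _ | ⟨hd, hr⟩ := hr
      exact .head (b := (_, _)) ⟨_, hs, hd⟩ (ih _ hr)

end LabelledWalks

section Semantics

variable {V σ : Type*} {G : Finset (V × σ × V)}

lemma sem_star_of_sem_of_sem_star {e : PP σ} {x y z : V} (hxy : sem G e x y)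
    (hyz : sem G e.star y z) : sem G e.star x z := by
  rcases hyz with ⟨n, hn⟩ | ⟨rfl, _⟩
  · exact Or.inl ⟨n + 1, y, hxy, hn⟩
  · exact Or.inl ⟨0, hxy⟩

lemma exists_labPath_of_sem {e : PP σ} {x y : V} (h : sem G e x y) :
    ∃ w ∈ lang e, LabPath G x w y := by
  induction e generalizing x y with
  | base a => exact ⟨[.pos a], rfl, .cons h (.nil y)⟩
  | inv e ih =>
    obtain ⟨w, hw, hp⟩ := ih h
    exact ⟨winv w, ⟨w, hw, rfl⟩, hp.winv⟩
  | comp e₁ e₂ ih₁ ih₂ =>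
    obtain ⟨m, h₁, h₂⟩ := h
    obtain ⟨w₁, hw₁, hp₁⟩ := ih₁ h₁
    obtain ⟨w₂, hw₂, hp₂⟩ := ih₂ h₂
    exact ⟨w₁ ++ w₂, Language.append_mem_mul hw₁ hw₂, hp₁.append hp₂⟩
  | alt e₁ e₂ ih₁ ih₂ =>
    rcases h with h | h
    · obtain ⟨w, hw, hp⟩ := ih₁ h
      exact ⟨w, Or.inl hw, hp⟩
    · obtain ⟨w, hw, hp⟩ := ih₂ h
      exact ⟨w, Or.inr hw, hp⟩
  | star e ih =>
    rcases h with ⟨n, hn⟩ | ⟨rfl, _⟩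
    · induction n generalizing x with
      | zero =>
        obtain ⟨w, hw, hp⟩ := ih hn
        exact ⟨w, Language.mem_kstar.mpr ⟨[w], by simp, by simpa using hw⟩, hp⟩
      | succ n ihn =>
        obtain ⟨m, h₁, h₂⟩ := hn
        obtain ⟨w₁, hw₁, hp₁⟩ := ih h₁
        obtain ⟨w₂, hw₂, hp₂⟩ := ihn h₂
        refine ⟨w₁ ++ w₂, ?_, hp₁.append hp₂⟩
        rw [lang, ← Language.one_add_self_mul_kstar_eq_kstar]
        exact Or.inr (Language.append_mem_mul hw₁ hw₂)
    · exact ⟨[], Language.nil_mem_kstar _, .nil x⟩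
  | opt e ih =>
    rcases h with h | ⟨rfl, _⟩
    · obtain ⟨w, hw, hp⟩ := ih h
      exact ⟨w, Or.inl hw, hp⟩
    · exact ⟨[], Or.inr rfl, .nil x⟩

lemma sem_of_labPath {e : PP σ} {w : List (Signed σ)} {x y : V} (hw : w ∈ lang e)
    (hp : LabPath G x w y) (hx : IsTerm G x) : sem G e x y := by
  induction e generalizing w x y with
  | base a =>
    obtain rfl : w = [.pos a] := hw
    obtain _ | ⟨hs, _ | _⟩ := hp
    exact hs
  | inv e ih =>
    obtain ⟨w, hw, rfl⟩ := hw
    exact ih hw (labPath_winv_iff.mp hp) (hp.isTerm hx)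
  | comp e₁ e₂ ih₁ ih₂ =>
    obtain ⟨w₁, hw₁, w₂, hw₂, rfl⟩ := Language.mem_mul.mp hw
    obtain ⟨m, hp₁, hp₂⟩ := labPath_append_iff.mp hp
    exact ⟨m, ih₁ hw₁ hp₁ hx, ih₂ hw₂ hp₂ (hp₁.isTerm hx)⟩
  | alt e₁ e₂ ih₁ ih₂ =>
    rcases hw with hw | hw
    · exact Or.inl (ih₁ hw hp hx)
    · exact Or.inr (ih₂ hw hp hx)
  | star e ih =>
    obtain ⟨S, rfl, hS⟩ := Language.mem_kstar.mp hw
    induction S generalizing x with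
    | nil =>
      obtain _ | _ := hp
      exact Or.inr ⟨rfl, hx⟩
    | cons w S ihS =>
      obtain ⟨m, hp₁, hp₂⟩ := labPath_append_iff.mp hp
      have hS' : ∀ v ∈ S, v ∈ lang e := fun v hv => hS v (List.mem_cons_of_mem w hv)
      exact sem_star_of_sem_of_sem_star (ih (hS w List.mem_cons_self) hp₁ hx)
        (ihS (hp₁.isTerm hx) hS' (Language.join_mem_kstar hS') hp₂)
  | opt e ih =>
    rcases hw with hw | hw
    · exact Or.inl (ih hw hp hx)
    · obtain rfl : w = [] := hw
      obtain _ | _ := hp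
      exact Or.inr ⟨rfl, hx⟩

lemma sem_iff_exists_labPath {e : PP σ} {x y : V} (hx : IsTerm G x) :
    sem G e x y ↔ ∃ w ∈ lang e, LabPath G x w y :=
  ⟨exists_labPath_of_sem, fun ⟨_, hw, hp⟩ => sem_of_labPath hw hp hx⟩

end Semantics

theorem stmt0_general {V σ Q : Type*}
    (G : Finset (V × σ × V)) (e : PP σ)
    (δ : Q → Signed σ → Q → Prop) (q0 : Q) (F : Set Q)
    (hL : nfaLang δ q0 F = lang e)
    (u : V) (hu : IsTerm G u) :
    ∀ v : V, sem G e u v ↔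
      ∃ qf ∈ F, Relation.ReflTransGen (ProdEdge G δ) (u, q0) (v, qf) := by
  intro v
  simp only [sem_iff_exists_labPath hu, ← hL, nfaLang, reflTransGen_prodEdge_iff]
  constructor
  · rintro ⟨w, ⟨qf, hqf, hr⟩, hp⟩
    exact ⟨qf, hqf, w, hp, hr⟩
  · rintro ⟨qf, hqf, w, hp, hr⟩
    exact ⟨w, ⟨qf, hqf, hr⟩, hp⟩

/-- `(u,v) ∈ ⟦e⟧_G` iff some accepting state `q_f ∈ F` is reachable
at `(v,q_f)` from `(u,q0)` in the product graph `G × A`, provided `L(A) = L(e)`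
and `u` is a term of `G`. -/
theorem stmt0 {V σ Q : Type*} [Fintype Q]
    (G : Finset (V × σ × V)) (e : PP σ)
    (δ : Q → Signed σ → Q → Prop) (q0 : Q) (F : Set Q)
    (hL : nfaLang δ q0 F = lang e)
    (u : V) (hu : IsTerm G u) :
    ∀ v : V, sem G e u v ↔
      ∃ qf ∈ F, Relation.ReflTransGen (ProdEdge G δ) (u, q0) (v, qf) :=
  stmt0_general G e δ q0 F hL u hu
end

section
/- Soundness of evaluation over a dynamically retrieved subgraph: let G' ⊆ G be RDF graphs over nodes V and labels Σ, let e be a property path, let A = (Q, Σ±, q0, F, δ) be an NFA over Σ± with L(A) = L(e), and assume u is a term of G'. If there exist an accepting state q_f ∈ F and a directed path in the product graph G' × A from (u, q0) to (v, q_f), then (u,v) ∈ ⟦e⟧_G. -/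
section Aux
variable {V σ Q : Type*}

lemma step_flip {G : Finset (V × σ × V)} {ℓ : Signed σ} {x y : V}
    (h : Step G ℓ x y) : Step G ℓ.flip y x := by cases ℓ <;> exact h

lemma step_term {G : Finset (V × σ × V)} {ℓ : Signed σ} {x y : V}
    (h : Step G ℓ x y) : IsTerm G y := by
  cases ℓ with
  | pos a => exact ⟨a, x, Or.inr h⟩
  | neg a => exact ⟨a, x, Or.inl h⟩

lemma labPath_mono {G' G : Finset (V × σ × V)} (hsub : G' ⊆ G) {x y : V}
    {w : List (Signed σ)} (h : LabPath G' x w y) : LabPath G x w y := by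
  induction h with
  | nil x => exact .nil x
  | cons hs _ ih =>
    refine .cons ?_ ih
    rename_i ℓ _ _
    cases ℓ <;> exact hsub hs

lemma labPath_term {G : Finset (V × σ × V)} {x y : V} {w : List (Signed σ)}
    (h : LabPath G x w y) (hx : IsTerm G x) : IsTerm G y := by
  induction h with
  | nil => exact hx
  | cons hs _ ih => exact ih (step_term hs)

lemma labPath_trans {G : Finset (V × σ × V)} {x y z : V} {w₁ w₂ : List (Signed σ)}
    (h₁ : LabPath G x w₁ y) (h₂ : LabPath G y w₂ z) : LabPath G x (w₁ ++ w₂) z := by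
  induction h₁ with
  | nil => exact h₂
  | cons hs _ ih => exact .cons hs (ih h₂)

lemma labPath_append {G : Finset (V × σ × V)} {x z : V} {w₁ w₂ : List (Signed σ)}
    (h : LabPath G x (w₁ ++ w₂) z) : ∃ y, LabPath G x w₁ y ∧ LabPath G y w₂ z := by
  induction w₁ generalizing x with
  | nil => exact ⟨x, .nil x, h⟩
  | cons ℓ w ih =>
    cases h with
    | cons hs hp =>
      obtain ⟨y, hy1, hy2⟩ := ih hp
      exact ⟨y, .cons hs hy1, hy2⟩

lemma labPath_winv {G : Finset (V × σ × V)} {x y : V} {w : List (Signed σ)}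
    (h : LabPath G x w y) : LabPath G y (winv w) x := by
  induction h with
  | nil x => exact .nil x
  | cons hs _ ih =>
    simpa [winv] using labPath_trans ih (.cons (step_flip hs) (.nil _))

lemma sound {G : Finset (V × σ × V)} (e : PP σ) :
    ∀ w x y, w ∈ lang e → LabPath G x w y → IsTerm G x → sem G e x y := by
  induction e with
  | base a =>
    intro w x y hw hp _
    rw [Set.mem_singleton_iff.mp hw] at hp
    cases hp with
    | cons hs hp' => cases hp'; exact hs
  | inv e ih =>
    intro w x y hw hp hx
    obtain ⟨w', hw', rfl⟩ := hw
    have hy : IsTerm G y := labPath_term hp hx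
    have := labPath_winv hp
    rw [winv_winv] at this
    exact ih w' y x hw' this hy
  | comp e₁ e₂ ih₁ ih₂ =>
    intro w x y hw hp hx
    obtain ⟨w₁, hw₁, w₂, hw₂, rfl⟩ := hw
    obtain ⟨z, hz1, hz2⟩ := labPath_append hp
    exact ⟨z, ih₁ w₁ x z hw₁ hz1 hx, ih₂ w₂ z y hw₂ hz2 (labPath_term hz1 hx)⟩
  | alt e₁ e₂ ih₁ ih₂ =>
    intro w x y hw hp hx
    cases hw with
    | inl h => exact Or.inl (ih₁ w x y h hp hx)
    | inr h => exact Or.inr (ih₂ w x y h hp hx)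
  | star e ih =>
    intro w x y hw hp hx
    obtain ⟨L, rfl, hL⟩ := Language.mem_kstar.mp hw
    clear hw
    induction L generalizing x with
    | nil =>
      cases hp
      exact Or.inr ⟨rfl, hx⟩
    | cons w₁ L' ihL =>
      obtain ⟨z, hz1, hz2⟩ := labPath_append hp
      have h₁ : sem G e x z := ih w₁ x z (hL w₁ (by simp)) hz1 hx
      have := ihL z (labPath_term hz1 hx) (fun y hy => hL y (by simp [hy])) hz2
      cases this with
      | inl h =>
        obtain ⟨n, hn⟩ := h
        exact Or.inl ⟨n + 1, z, h₁, hn⟩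
      | inr h =>
        exact Or.inl ⟨0, h.1 ▸ h₁⟩
  | opt e ih =>
    intro w x y hw hp hx
    cases hw with
    | inl h => exact Or.inl (ih w x y h hp hx)
    | inr h =>
      rw [(Language.mem_one _).mp h] at hp
      cases hp
      exact Or.inr ⟨rfl, hx⟩

lemma prod_run {G' : Finset (V × σ × V)} {δ : Q → Signed σ → Q → Prop}
    {p p' : V × Q} (h : Relation.ReflTransGen (ProdEdge G' δ) p p') :
    ∃ w, LabPath G' p.1 w p'.1 ∧ NFARun δ p.2 w p'.2 := by
  induction h using Relation.ReflTransGen.head_induction_on with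
  | refl => exact ⟨[], .nil _, .nil _⟩
  | head hab _ ih =>
    obtain ⟨ℓ, hs, hd⟩ := hab
    obtain ⟨w, hw1, hw2⟩ := ih
    exact ⟨ℓ :: w, .cons hs hw1, .cons hd hw2⟩

end Aux

/-- soundness of evaluation over a dynamically retrieved subgraph:
if `G' ⊆ G`, `L(A) = L(e)`, `u` is a term of `G'`, and some accepting state is
reachable at `(v,q_f)` from `(u,q0)` in `G' × A`, then `(u,v) ∈ ⟦e⟧_G`. -/
theorem stmt9 {V σ Q : Type*} [Fintype Q]
    (G' G : Finset (V × σ × V)) (hsub : G' ⊆ G) (e : PP σ)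
    (δ : Q → Signed σ → Q → Prop) (q0 : Q) (F : Set Q)
    (hL : nfaLang δ q0 F = lang e)
    (u : V) (hu : IsTerm G' u) (v : V)
    (hreach : ∃ qf ∈ F, Relation.ReflTransGen (ProdEdge G' δ) (u, q0) (v, qf)) :
    sem G e u v := by
  obtain ⟨qf, hqf, hr⟩ := hreach
  obtain ⟨w, hw1, hw2⟩ := prod_run hr
  have hwL : w ∈ lang e := by rw [← hL]; exact ⟨qf, hqf, hw2⟩
  have huG : IsTerm G u := by
    obtain ⟨p, y, h⟩ := hu
    exact ⟨p, y, h.imp (fun h => hsub h) (fun h => hsub h)⟩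
  exact sound e w u v hwL (labPath_mono hsub hw1) huG
end
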